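/- Let f_1, ..., f_n ∈ ℚ[t]^m have degrees d_1 ≤ ... ≤ d_n and linearly independent pilot vectors. Then the pilot vector of the i-th Gram–Schmidt vector f_i* (computed over ℚ(t)) equals the i-th Gram–Schmidt vector of the pilot vectors: (f_i*)~ = (f̃_i)* for 1 ≤ i ≤ n. -/

import Mathlib

open Polynomial Filter

noncomputable def dotF {F : Type*} [CommRing F] {m : ℕ} (u v : Fin m → F) : F :=
  ∑ k, u k * v k

noncomputable def gs {F : Type*} [Field F] {m : ℕ} (f : ℕ → (Fin m → F)) : ℕ → (Fin m → F)
  | i => f i - ∑ j : Fin i,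
      (dotF (f i) (gs f j) / dotF (gs f j) (gs f j)) • gs f j
  termination_by i => i
  decreasing_by exact j.2

noncomputable def gsCoeff {F : Type*} [Field F] {m : ℕ} (f : ℕ → (Fin m → F)) (i j : ℕ) : F :=
  dotF (f i) (gs f j) / dotF (gs f j) (gs f j)

/-- The degree of a vector of polynomials: max of the coordinate degrees (`natDegree`). -/
noncomputable def degVec {m : ℕ} {R : Type*} [Semiring R] (f : Fin m → Polynomial R) : ℕ :=
  Finset.univ.sup fun k => (f k).natDegree

/-- The pilot vector: the vector of coefficients in degree `degVec f`. -/
noncomputable def pilot {m : ℕ} {R : Type*} [Semiring R] (f : Fin m → Polynomial R) : Fin m → R :=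
  fun k => (f k).coeff (degVec f)

/-- View a vector of rational polynomials inside ℚ(t)^m. -/
noncomputable def toRF {m : ℕ} (f : Fin m → Polynomial ℚ) : Fin m → RatFunc ℚ :=
  fun k => algebraMap (Polynomial ℚ) (RatFunc ℚ) (f k)

/-- Evaluation of a rational function at a real number (junk at poles). -/
noncomputable def evalR (r : RatFunc ℚ) (t : ℝ) : ℝ :=
  RatFunc.eval (algebraMap ℚ ℝ) t r

open Classical in
/-- The leading coefficient of a rational function in a prescribed degree d:
nonzero only if its degree is exactly d. -/
noncomputable def leadCoeffAt (r : RatFunc ℚ) (d : ℤ) : ℚ :=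
  if r.intDegree = d ∧ r ≠ 0 then r.num.leadingCoeff / r.denom.leadingCoeff else 0

/-! ### Auxiliary lemmas -/

lemma poly_ev_ne {p : ℚ[X]} (hp : p ≠ 0) :
    ∀ᶠ t : ℝ in atTop, Polynomial.eval₂ (algebraMap ℚ ℝ) t p ≠ 0 := by
  have h2 : p.map (algebraMap ℚ ℝ) ≠ 0 :=
    (Polynomial.map_ne_zero_iff (algebraMap ℚ ℝ).injective).2 hp
  filter_upwards [Polynomial.eventually_no_roots _ h2] with t ht
  rw [← Polynomial.eval_map]
  exact ht

lemma tendsto_poly (p : ℚ[X]) (d : ℕ) (hp : p.natDegree ≤ d) :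
    Tendsto (fun t : ℝ => Polynomial.eval₂ (algebraMap ℚ ℝ) t p / t ^ d) atTop
      (nhds (algebraMap ℚ ℝ (p.coeff d))) := by
  have hev : ∀ t : ℝ, Polynomial.eval₂ (algebraMap ℚ ℝ) t p
      = ∑ i ∈ Finset.range (d + 1), algebraMap ℚ ℝ (p.coeff i) * t ^ i := by
    intro t
    rw [← Polynomial.eval_map,
      Polynomial.eval_eq_sum_range' (n := d + 1)
        (lt_of_le_of_lt (Polynomial.natDegree_map_le) (Nat.lt_succ_of_le hp))]
    simp [Polynomial.coeff_map]
  have key : ∀ i ∈ Finset.range (d+1),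
      Tendsto (fun t : ℝ => algebraMap ℚ ℝ (p.coeff i) * t ^ i / t ^ d) atTop
        (nhds (if i = d then algebraMap ℚ ℝ (p.coeff d) else 0)) := by
    intro i hi
    rcases eq_or_lt_of_le (Nat.lt_succ_iff.1 (Finset.mem_range.1 hi)) with h | h
    · rw [if_pos h]
      subst h
      apply Tendsto.congr' ?_ tendsto_const_nhds
      filter_upwards [eventually_ne_atTop (0:ℝ)] with t ht
      rw [mul_div_assoc, div_self (pow_ne_zero _ ht), mul_one]
    · rw [if_neg h.ne]
      have heq : (fun t : ℝ => algebraMap ℚ ℝ (p.coeff i) * t ^ i / t ^ d)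
          =ᶠ[atTop] fun t => algebraMap ℚ ℝ (p.coeff i) / t ^ (d - i) := by
        filter_upwards [eventually_ne_atTop (0:ℝ)] with t ht
        have hpow : (t:ℝ)^d = t^i * t^(d-i) := by rw [← pow_add]; congr 1; omega
        rw [hpow, mul_comm (algebraMap ℚ ℝ (p.coeff i)) (t^i),
          mul_div_mul_left _ _ (pow_ne_zero _ ht)]
      refine Tendsto.congr' heq.symm ?_
      exact Tendsto.div_atTop tendsto_const_nhds (tendsto_pow_atTop (by omega))
  have h := tendsto_finset_sum _ key
  rw [Finset.sum_ite_eq' (Finset.range (d+1)) d,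
    if_pos (Finset.self_mem_range_succ d)] at h
  refine Tendsto.congr' ?_ h
  filter_upwards with t
  rw [hev t, Finset.sum_div]

lemma dne (r : RatFunc ℚ) :
    ∀ᶠ t : ℝ in atTop, Polynomial.eval₂ (algebraMap ℚ ℝ) t r.denom ≠ 0 :=
  poly_ev_ne (RatFunc.denom_ne_zero r)

lemma evalR_eq (r : RatFunc ℚ) (t : ℝ) :
    evalR r t = Polynomial.eval₂ (algebraMap ℚ ℝ) t r.num
      / Polynomial.eval₂ (algebraMap ℚ ℝ) t r.denom := rfl

lemma ev_add (r s : RatFunc ℚ) :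
    ∀ᶠ t : ℝ in atTop, evalR (r + s) t = evalR r t + evalR s t := by
  filter_upwards [dne r, dne s] with t h1 h2
  exact RatFunc.eval_add _ _ h1 h2

lemma ev_mul (r s : RatFunc ℚ) :
    ∀ᶠ t : ℝ in atTop, evalR (r * s) t = evalR r t * evalR s t := by
  filter_upwards [dne r, dne s] with t h1 h2
  exact RatFunc.eval_mul _ _ h1 h2

lemma ev_zero (t : ℝ) : evalR 0 t = 0 := by
  simp [evalR]

lemma ev_sub (r s : RatFunc ℚ) :
    ∀ᶠ t : ℝ in atTop, evalR (r - s) t = evalR r t - evalR s t := by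
  filter_upwards [ev_add (r - s) s] with t h1
  rw [sub_add_cancel] at h1
  rw [h1]; ring

lemma ev_ne {r : RatFunc ℚ} (hr : r ≠ 0) :
    ∀ᶠ t : ℝ in atTop, evalR r t ≠ 0 := by
  filter_upwards [poly_ev_ne (RatFunc.num_ne_zero hr), dne r] with t h1 h2
  rw [evalR_eq]
  exact div_ne_zero h1 h2

lemma ev_div (r s : RatFunc ℚ) (hs : s ≠ 0) :
    ∀ᶠ t : ℝ in atTop, evalR (r / s) t = evalR r t / evalR s t := by
  filter_upwards [ev_mul (r / s) s, ev_ne hs] with t h1 h2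
  rw [div_mul_cancel₀ r hs] at h1
  rw [h1, mul_div_cancel_right₀ _ h2]

lemma ev_sum {ι : Type*} (s : Finset ι) (g : ι → RatFunc ℚ) :
    ∀ᶠ t : ℝ in atTop, evalR (∑ j ∈ s, g j) t = ∑ j ∈ s, evalR (g j) t := by
  classical
  induction s using Finset.induction with
  | empty => filter_upwards with t; simp [ev_zero]
  | insert _ _ hx ih =>
    rename_i a s'
    filter_upwards [ev_add (g a) (∑ j ∈ s', g j), ih] with t h1 h2
    rw [Finset.sum_insert hx, h1, h2, Finset.sum_insert hx]

lemma lead_of_tendsto (r : RatFunc ℚ) (d : ℕ) (c : ℚ)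
    (h : Tendsto (fun t : ℝ => evalR r t / t ^ d) atTop (nhds (algebraMap ℚ ℝ c))) :
    leadCoeffAt r d = c := by
  have hinj := (algebraMap ℚ ℝ).injective
  by_cases hr : r = 0
  · subst hr
    have h0 : Tendsto (fun t : ℝ => evalR 0 t / t ^ d) atTop (nhds 0) := by
      simpa [ev_zero] using (tendsto_const_nhds : Tendsto (fun _ : ℝ => (0:ℝ)) atTop _)
    have hc : c = 0 := hinj (by simpa using (tendsto_nhds_unique h h0))
    simp [leadCoeffAt, hc]
  · have hN := tendsto_poly r.num r.num.natDegree le_rfl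
    have hD := tendsto_poly r.denom r.denom.natDegree le_rfl
    rw [Polynomial.coeff_natDegree] at hN hD
    set a := r.num.natDegree with ha
    set b := r.denom.natDegree with hb
    have hNl : algebraMap ℚ ℝ r.num.leadingCoeff ≠ 0 := by
      simpa using Polynomial.leadingCoeff_ne_zero.2 (RatFunc.num_ne_zero hr)
    have hDl : algebraMap ℚ ℝ r.denom.leadingCoeff ≠ 0 := by
      simpa using Polynomial.leadingCoeff_ne_zero.2 (RatFunc.denom_ne_zero r)
    have hid : r.intDegree = (a : ℤ) - b := rfl
    rcases lt_trichotomy ((a:ℤ)) ((b:ℤ) + d) with hlt | heq | hgt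
    · -- degree too small : c = 0
      set k := b + d - a with hk
      have hk0 : k ≠ 0 := by omega
      have hevent : (fun t : ℝ => evalR r t / t ^ d) =ᶠ[atTop]
          fun t => (Polynomial.eval₂ (algebraMap ℚ ℝ) t r.num / t ^ a) *
            (Polynomial.eval₂ (algebraMap ℚ ℝ) t r.denom / t ^ b)⁻¹ * (t ^ k)⁻¹ := by
        filter_upwards [dne r, eventually_ne_atTop (0:ℝ)] with t hDt ht
        have hpow : (t:ℝ) ^ a * t ^ k = t ^ b * t ^ d := by
          rw [← pow_add, ← pow_add]; congr 1; omega
        rw [evalR_eq]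
        field_simp
        linear_combination (Polynomial.eval₂ (algebraMap ℚ ℝ) t r.num) * hpow
      have hlim := Tendsto.congr' hevent h
      have h2 : Tendsto (fun t : ℝ => (Polynomial.eval₂ (algebraMap ℚ ℝ) t r.num / t ^ a) *
            (Polynomial.eval₂ (algebraMap ℚ ℝ) t r.denom / t ^ b)⁻¹ * (t ^ k)⁻¹) atTop
            (nhds 0) := by
        have := (hN.mul (hD.inv₀ hDl)).mul
          (Tendsto.inv_tendsto_atTop (tendsto_pow_atTop hk0))
        simpa using this
      have hc : c = 0 := hinj (by simpa using (tendsto_nhds_unique hlim h2))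
      have hcond : ¬(r.intDegree = (d:ℤ) ∧ r ≠ 0) := by
        rintro ⟨h1, -⟩; rw [hid] at h1; omega
      simp [leadCoeffAt, hcond, hc]
    · -- degree exactly d
      have hevent : (fun t : ℝ => Polynomial.eval₂ (algebraMap ℚ ℝ) t r.num / t ^ a)
          =ᶠ[atTop] fun t => (evalR r t / t ^ d) *
            (Polynomial.eval₂ (algebraMap ℚ ℝ) t r.denom / t ^ b) := by
        filter_upwards [dne r, eventually_ne_atTop (0:ℝ)] with t hDt ht
        have hpow : (t:ℝ) ^ a = t ^ b * t ^ d := by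
          rw [← pow_add]; congr 1; omega
        rw [evalR_eq, hpow]
        field_simp
      have h2 := Tendsto.congr' hevent.symm (h.mul hD)
      have h3 := tendsto_nhds_unique hN h2
      rw [← map_mul] at h3
      have h4 : r.num.leadingCoeff = c * r.denom.leadingCoeff := hinj h3
      have hcond : r.intDegree = (d:ℤ) ∧ r ≠ 0 := ⟨by rw [hid]; omega, hr⟩
      rw [leadCoeffAt, if_pos hcond, h4,
        mul_div_cancel_right₀ _ (Polynomial.leadingCoeff_ne_zero.2 (RatFunc.denom_ne_zero r))]
    · -- degree too big : contradiction
      exfalso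
      set k := a - b - d with hk
      have hk0 : k ≠ 0 := by omega
      have hevent : (fun t : ℝ => (t:ℝ) ^ k) =ᶠ[atTop]
          fun t => (evalR r t / t ^ d) *
            (Polynomial.eval₂ (algebraMap ℚ ℝ) t r.num / t ^ a)⁻¹ *
            (Polynomial.eval₂ (algebraMap ℚ ℝ) t r.denom / t ^ b) := by
        filter_upwards [dne r, poly_ev_ne (RatFunc.num_ne_zero hr),
          eventually_ne_atTop (0:ℝ)] with t hDt hNt ht
        have hpow : (t:ℝ) ^ a = t ^ b * t ^ d * t ^ k := by
          rw [← pow_add, ← pow_add]; congr 1; omega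
        rw [evalR_eq, hpow]
        field_simp
      have h2 := Tendsto.congr' hevent.symm ((h.mul (hN.inv₀ hNl)).mul hD)
      exact not_tendsto_nhds_of_tendsto_atTop (tendsto_pow_atTop hk0) _ h2

lemma gs_apply {F : Type*} [Field F] {m : ℕ} (f : ℕ → (Fin m → F)) (i : ℕ) :
    gs f i = f i - ∑ j : Fin i, gsCoeff f i j • gs f j := by
  rw [gs]; rfl

lemma gs_sub_mem {F : Type*} [Field F] {m : ℕ} (f : ℕ → (Fin m → F)) (i : ℕ) :
    gs f i - f i ∈ Submodule.span F (f '' Set.Iio i) := by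
  induction i using Nat.strong_induction_on with
  | _ i IH =>
    rw [gs_apply]
    have h : f i - (∑ j : Fin i, gsCoeff f i j • gs f j) - f i
        = -(∑ j : Fin i, gsCoeff f i j • gs f j) := by abel
    rw [h]
    refine neg_mem (Submodule.sum_mem _ fun j _ => Submodule.smul_mem _ _ ?_)
    have h1 : gs f j - f j ∈ Submodule.span F (f '' Set.Iio (j:ℕ)) := IH j j.2
    have h2 : Set.Iio (j:ℕ) ⊆ Set.Iio i := fun x hx => lt_trans hx j.2
    have h3 : gs f j - f j ∈ Submodule.span F (f '' Set.Iio i) :=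
      Submodule.span_mono (Set.image_mono h2) h1
    have h4 : f (j:ℕ) ∈ Submodule.span F (f '' Set.Iio i) :=
      Submodule.subset_span ⟨j, j.2, rfl⟩
    simpa using add_mem h3 h4

lemma gs_ne_zero {m n : ℕ} (G : ℕ → Fin m → ℚ)
    (hli : LinearIndependent ℚ (fun i : Fin n => G i)) :
    ∀ i < n, gs G i ≠ 0 := by
  intro i hi h0
  have h1 : G i ∈ Submodule.span ℚ (G '' Set.Iio i) := by
    have := gs_sub_mem G i
    rw [h0] at this
    simpa using neg_mem this
  have h2 : (fun j : Fin n => G j) '' {j : Fin n | (j:ℕ) < i} = G '' Set.Iio i := by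
    ext x
    constructor
    · rintro ⟨j, hj, rfl⟩; exact ⟨j, hj, rfl⟩
    · rintro ⟨l, hl, rfl⟩; exact ⟨⟨l, lt_trans hl hi⟩, hl, rfl⟩
  have h3 := hli.notMem_span_image (s := {j : Fin n | (j:ℕ) < i}) (x := ⟨i, hi⟩)
    (by simp)
  rw [h2] at h3
  exact h3 h1

lemma dot_ne_zero {m : ℕ} (v : Fin m → ℚ) (hv : v ≠ 0) : dotF v v ≠ 0 := by
  obtain ⟨k, hk⟩ := Function.ne_iff.1 hv
  have h : 0 < dotF v v := by
    refine Finset.sum_pos' (fun i _ => mul_self_nonneg _) ⟨k, Finset.mem_univ k, ?_⟩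
    exact mul_self_pos.2 hk
  exact h.ne'

set_option maxHeartbeats 2000000 in
set_option synthInstance.maxHeartbeats 1000000 in
/-- the pilot vector of the i-th Gram–Schmidt vector (computed over ℚ(t),
taken in degree d i) equals the i-th Gram–Schmidt vector of the pilot vectors. -/
theorem pilot_gs_eq_gs_pilot {m n : ℕ} (f : ℕ → Fin m → Polynomial ℚ) (d : ℕ → ℕ)
    (hdeg : ∀ i < n, f i ≠ 0 ∧ degVec (f i) = d i)
    (hmono : ∀ i j, i ≤ j → j < n → d i ≤ d j)
    (hli : LinearIndependent ℚ (fun i : Fin n => pilot (f i))) :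
    ∀ i < n,
      (fun k : Fin m => leadCoeffAt (gs (fun j => toRF (f j)) i k) (d i)) =
        gs (fun j => pilot (f j)) i := by
  have hinj := (algebraMap ℚ ℝ).injective
  set F : ℕ → Fin m → RatFunc ℚ := fun j => toRF (f j) with hF
  set G : ℕ → Fin m → ℚ := fun j => pilot (f j) with hG
  have main : ∀ i, i < n → ∀ k : Fin m,
      Tendsto (fun t : ℝ => evalR (gs F i k) t / t ^ d i) atTop
        (nhds (algebraMap ℚ ℝ (gs G i k))) := by
    intro i
    induction i using Nat.strong_induction_on with
    | _ i IH =>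
      intro hi k
      -- convergence for the original vectors
      have hFi : ∀ k : Fin m, Tendsto (fun t : ℝ => evalR (F i k) t / t ^ d i) atTop
          (nhds (algebraMap ℚ ℝ (G i k))) := by
        intro k
        have hdi := (hdeg i hi).2
        have hco : G i k = (f i k).coeff (d i) := by
          rw [hG]; simp only [pilot]; rw [hdi]
        have hle : (f i k).natDegree ≤ d i := by
          rw [← hdi]
          exact Finset.le_sup (f := fun k => (f i k).natDegree) (Finset.mem_univ k)
        have hevp : ∀ t : ℝ, evalR (F i k) t
            = Polynomial.eval₂ (algebraMap ℚ ℝ) t (f i k) := by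
          intro t
          rw [evalR_eq]
          have h1 : (F i k).num = f i k := by
            rw [hF]; exact RatFunc.num_algebraMap _
          have h2 : (F i k).denom = 1 := by
            rw [hF]; exact RatFunc.denom_algebraMap _
          rw [h1, h2]
          simp
        rw [hco]
        refine Tendsto.congr (fun t => ?_) (tendsto_poly (f i k) (d i) hle)
        rw [hevp]
      -- self dot products of previous gs vectors
      have hds : ∀ j : Fin i,
          Tendsto (fun t : ℝ => evalR (dotF (gs F (j:ℕ)) (gs F (j:ℕ))) t
              / (t ^ d (j:ℕ) * t ^ d (j:ℕ))) atTop
            (nhds (algebraMap ℚ ℝ (dotF (gs G (j:ℕ)) (gs G (j:ℕ))))) := by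
        intro j
        have hgsj := IH j j.2 (lt_trans j.2 hi)
        have hlim := tendsto_finset_sum Finset.univ
          (fun k (_ : k ∈ Finset.univ) => (hgsj k).mul (hgsj k))
        have hval : (∑ k : Fin m, algebraMap ℚ ℝ (gs G (j:ℕ) k) * algebraMap ℚ ℝ (gs G (j:ℕ) k))
            = algebraMap ℚ ℝ (dotF (gs G (j:ℕ)) (gs G (j:ℕ))) := by
          rw [dotF, map_sum]
          simp [map_mul]
        rw [hval] at hlim
        refine Tendsto.congr' ?_ hlim
        filter_upwards [ev_sum Finset.univ (fun k : Fin m => gs F (j:ℕ) k * gs F (j:ℕ) k),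
          eventually_all.2 (fun k : Fin m => ev_mul (gs F (j:ℕ) k) (gs F (j:ℕ) k))]
          with t h1 h2
        rw [show dotF (gs F (j:ℕ)) (gs F (j:ℕ)) = ∑ k : Fin m, gs F (j:ℕ) k * gs F (j:ℕ) k
          from rfl, h1, Finset.sum_div]
        exact (Finset.sum_congr rfl fun k _ => by rw [h2 k, div_mul_div_comm]).symm
      -- cross dot products
      have hdc : ∀ j : Fin i,
          Tendsto (fun t : ℝ => evalR (dotF (F i) (gs F (j:ℕ))) t
              / (t ^ d i * t ^ d (j:ℕ))) atTop
            (nhds (algebraMap ℚ ℝ (dotF (G i) (gs G (j:ℕ))))) := by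
        intro j
        have hgsj := IH j j.2 (lt_trans j.2 hi)
        have hlim := tendsto_finset_sum Finset.univ
          (fun k (_ : k ∈ Finset.univ) => (hFi k).mul (hgsj k))
        have hval : (∑ k : Fin m, algebraMap ℚ ℝ (G i k) * algebraMap ℚ ℝ (gs G (j:ℕ) k))
            = algebraMap ℚ ℝ (dotF (G i) (gs G (j:ℕ))) := by
          rw [dotF, map_sum]
          simp [map_mul]
        rw [hval] at hlim
        refine Tendsto.congr' ?_ hlim
        filter_upwards [ev_sum Finset.univ (fun k : Fin m => F i k * gs F (j:ℕ) k),
          eventually_all.2 (fun k : Fin m => ev_mul (F i k) (gs F (j:ℕ) k))]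
          with t h1 h2
        rw [show dotF (F i) (gs F (j:ℕ)) = ∑ k : Fin m, F i k * gs F (j:ℕ) k
          from rfl, h1, Finset.sum_div]
        exact (Finset.sum_congr rfl fun k _ => by rw [h2 k, div_mul_div_comm]).symm
      -- nonvanishing of previous gs vectors
      have hGne : ∀ j : Fin i, dotF (gs G (j:ℕ)) (gs G (j:ℕ)) ≠ 0 := by
        intro j
        exact dot_ne_zero _ (gs_ne_zero G hli (j:ℕ) (lt_trans j.2 hi))
      have hFne : ∀ j : Fin i, dotF (gs F (j:ℕ)) (gs F (j:ℕ)) ≠ 0 := by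
        intro j h0
        have h1 := hds j
        rw [h0] at h1
        have h2 : Tendsto (fun t : ℝ => evalR 0 t / (t ^ d (j:ℕ) * t ^ d (j:ℕ))) atTop
            (nhds 0) := by
          simpa [ev_zero] using (tendsto_const_nhds : Tendsto (fun _ : ℝ => (0:ℝ)) atTop _)
        have h3 := hinj (a₁ := dotF (gs G (j:ℕ)) (gs G (j:ℕ))) (a₂ := 0)
          (by simpa using tendsto_nhds_unique h1 h2)
        exact hGne j h3
      -- coefficient convergence
      have hcoef : ∀ j : Fin i,
          Tendsto (fun t : ℝ => evalR (gsCoeff F i (j:ℕ)) t * t ^ d (j:ℕ) / t ^ d i) atTop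
            (nhds (algebraMap ℚ ℝ (gsCoeff G i (j:ℕ)))) := by
        intro j
        have hφne : algebraMap ℚ ℝ (dotF (gs G (j:ℕ)) (gs G (j:ℕ))) ≠ 0 := by
          intro h0
          exact hGne j (hinj (by rw [h0, map_zero]))
        have hlim := (hdc j).div (hds j) hφne
        have hval : algebraMap ℚ ℝ (dotF (G i) (gs G (j:ℕ)))
              / algebraMap ℚ ℝ (dotF (gs G (j:ℕ)) (gs G (j:ℕ)))
            = algebraMap ℚ ℝ (gsCoeff G i (j:ℕ)) := by
          rw [gsCoeff, map_div₀]
        rw [hval] at hlim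
        refine Tendsto.congr' ?_ hlim
        filter_upwards [ev_div (dotF (F i) (gs F (j:ℕ))) (dotF (gs F (j:ℕ)) (gs F (j:ℕ)))
            (hFne j), ev_ne (hFne j), eventually_ne_atTop (0:ℝ)] with t h1 h2 ht
        rw [show gsCoeff F i (j:ℕ)
          = dotF (F i) (gs F (j:ℕ)) / dotF (gs F (j:ℕ)) (gs F (j:ℕ)) from rfl, h1]
        simp only [Pi.div_apply]
        field_simp
      -- term convergence
      have hterm : ∀ j : Fin i, Tendsto
            (fun t : ℝ => evalR ((gsCoeff F i (j:ℕ) • gs F (j:ℕ)) k) t / t ^ d i) atTop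
            (nhds (algebraMap ℚ ℝ (gsCoeff G i (j:ℕ) * gs G (j:ℕ) k))) := by
        intro j
        have hgsj := IH j j.2 (lt_trans j.2 hi)
        have hlim := (hcoef j).mul (hgsj k)
        rw [← map_mul] at hlim
        refine Tendsto.congr' ?_ hlim
        filter_upwards [ev_mul (gsCoeff F i (j:ℕ)) (gs F (j:ℕ) k),
          eventually_ne_atTop (0:ℝ)] with t h1 ht
        rw [show (gsCoeff F i (j:ℕ) • gs F (j:ℕ)) k = gsCoeff F i (j:ℕ) * gs F (j:ℕ) k
          from rfl, h1]
        field_simp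
      -- assemble
      have hsum := tendsto_finset_sum Finset.univ (fun j (_ : j ∈ Finset.univ) => hterm j)
      have hlim := (hFi k).sub hsum
      have hval : algebraMap ℚ ℝ (G i k)
            - ∑ j : Fin i, algebraMap ℚ ℝ (gsCoeff G i (j:ℕ) * gs G (j:ℕ) k)
          = algebraMap ℚ ℝ (gs G i k) := by
        rw [← map_sum, ← map_sub]
        congr 1
        rw [gs_apply]
        simp
      rw [hval] at hlim
      refine Tendsto.congr' ?_ hlim
      have hgseq : gs F i k = F i k - ∑ j : Fin i, (gsCoeff F i (j:ℕ) • gs F (j:ℕ)) k := by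
        rw [gs_apply]
        simp
      filter_upwards [ev_sub (F i k) (∑ j : Fin i, (gsCoeff F i (j:ℕ) • gs F (j:ℕ)) k),
        ev_sum Finset.univ (fun j : Fin i => (gsCoeff F i (j:ℕ) • gs F (j:ℕ)) k)]
        with t h1 h2
      rw [hgseq, h1, h2, sub_div, Finset.sum_div]
  intro i hi
  funext k
  exact lead_of_tendsto _ _ _ (main i hi k)
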